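/- The graded trace Γtr(T) := Σ_i (-1)^⟨deg(e_i) + |T|, deg(e_i)⟩ T^i_i of homogeneous graded matrices over a (ℤ/2)^n-commutative algebra A vanishes on graded commutators: Γtr([S,T]) = 0 for all homogeneous graded matrices S, T, where [S,T] = ST - (-1)^⟨deg S, deg T⟩ TS. -/

import Mathlib

/-- The standard `ℤ/2`-valued scalar product on `(ℤ/2)ⁿ`. -/
def ip {n : ℕ} (x y : Fin n → ZMod 2) : ZMod 2 := ∑ i, x i * y i

/-- The graded trace of a square graded matrix `T` of degree `γ` with respect to
a homogeneous basis of degrees `degE`: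
`Γtr T = Σᵢ (-1)^⟨degE i + γ, degE i⟩ Tᵢᵢ`. -/
def gTrace {n r : ℕ} {A : Type*} [Ring A] (degE : Fin r → (Fin n → ZMod 2))
    (γ : Fin n → ZMod 2) (T : Matrix (Fin r) (Fin r) A) : A :=
  ∑ i, (-1 : A) ^ (ip (degE i + γ) (degE i)).val * T i i

lemma E_add {A : Type*} [Ring A] (x y : ZMod 2) :
    (-1 : A) ^ ((x + y).val) = (-1 : A) ^ x.val * (-1 : A) ^ y.val := by
  rw [ZMod.val_add, ← pow_add, neg_one_pow_eq_pow_mod_two (R := A) (n := x.val + y.val)]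

lemma zmod2_pt (a b x y : ZMod 2) :
    (a + (x + y)) * a + (x + a + b) * (y + b + a) = x * y + (b + (x + y)) * b := by
  revert a b x y; decide

lemma ip_key {n : ℕ} (di dj s t : Fin n → ZMod 2) :
    ip (di + (s + t)) di + ip (s + di + dj) (t + dj + di)
      = ip s t + ip (dj + (s + t)) dj := by
  unfold ip
  rw [← Finset.sum_add_distrib, ← Finset.sum_add_distrib]
  refine Finset.sum_congr rfl fun k _ => ?_
  simp only [Pi.add_apply]
  exact zmod2_pt (di k) (dj k) (s k) (t k)

lemma neg_one_pow_comm {A : Type*} [Ring A] (k : ℕ) (a : A) :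
    (-1 : A) ^ k * a = a * (-1 : A) ^ k := by
  rcases Nat.even_or_odd k with h | h
  · rw [h.neg_one_pow]; simp
  · rw [h.neg_one_pow]; simp

/-- The graded trace vanishes on graded commutators of homogeneous graded
matrices over a `(ℤ/2)ⁿ`-commutative algebra:
`Γtr ([S,T]) = 0` with `[S,T] = ST - (-1)^⟨s,t⟩ TS`. -/
theorem stmt12 (n r : ℕ) (A : Type*) [Ring A]
    (𝒜 : (Fin n → ZMod 2) → AddSubgroup A)
    (hcomm : ∀ (α β : Fin n → ZMod 2) (a b : A), a ∈ 𝒜 α → b ∈ 𝒜 β →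
      a * b = (-1 : A) ^ (ip α β).val * (b * a))
    (degE : Fin r → (Fin n → ZMod 2)) (s t : Fin n → ZMod 2)
    (S T : Matrix (Fin r) (Fin r) A)
    (hS : ∀ i j, S i j ∈ 𝒜 (s + degE i + degE j))
    (hT : ∀ i j, T i j ∈ 𝒜 (t + degE i + degE j)) :
    gTrace degE (s + t) (S * T - (-1 : A) ^ (ip s t).val • (T * S)) = 0 := by
  unfold gTrace
  simp only [Matrix.sub_apply, Matrix.smul_apply, Matrix.mul_apply, smul_eq_mul,
    mul_sub, Finset.mul_sum]
  rw [Finset.sum_sub_distrib, sub_eq_zero]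
  rw [Finset.sum_comm (s := Finset.univ) (t := Finset.univ)
    (f := fun i j => (-1 : A) ^ (ip (degE i + (s + t)) (degE i)).val *
      ((-1 : A) ^ (ip s t).val * (T i j * S j i)))]
  refine Finset.sum_congr rfl fun i _ => Finset.sum_congr rfl fun j _ => ?_
  -- goal: ε_i * (S i j * T j i) = ε_j * (c * (T j i * S i j))
  rw [hcomm _ _ _ _ (hS i j) (hT j i), ← mul_assoc, ← E_add, ip_key, E_add]
  conv_lhs => rw [neg_one_pow_comm]
  rw [mul_assoc]
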